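/- Let τ be a distributive triangle function and γ a τ-decomposable measure. The γ-integral is positively homogeneous: for every c ∈ ℝ₊ and every γ-integrable f: Ω → [0,∞], ∫_E (c·f) dγ = c ⊙ ∫_E f dγ. -/

import Mathlib

open MeasureTheory Filter Set Topology

noncomputable section

/-- The distribution function of the Dirac measure at 0. -/
def eps0 : ℝ → ℝ := fun x => if 0 < x then 1 else 0

/-- εₐ : the distribution function of the Dirac measure at `a`. -/
def epsAt (a : ℝ) : ℝ → ℝ := fun x => if a < x then 1 else 0

/-- Distance distribution function: non-decreasing, left-continuous,
vanishing on `(-∞,0]`, with values in `[0,1]` and `sup F = 1`. -/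
def IsDDF (F : ℝ → ℝ) : Prop :=
  Monotone F ∧ (∀ x : ℝ, ContinuousWithinAt F (Set.Iio x) x) ∧
  (∀ x ≤ (0:ℝ), F x = 0) ∧ (∀ x, 0 ≤ F x ∧ F x ≤ 1) ∧
  Tendsto F atTop (nhds 1)

/-- Triangle function on Δ⁺: maps Δ⁺ × Δ⁺ into Δ⁺, symmetric, associative,
non-decreasing in each variable, with ε₀ as identity. -/
def IsTriangleFn (τ : (ℝ → ℝ) → (ℝ → ℝ) → (ℝ → ℝ)) : Prop :=
  (∀ G H, IsDDF G → IsDDF H → IsDDF (τ G H)) ∧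
  (∀ G H, τ G H = τ H G) ∧
  (∀ F G H, τ (τ F G) H = τ F (τ G H)) ∧
  (∀ F G H : ℝ → ℝ, F ≤ G → τ F H ≤ τ G H) ∧
  (∀ G, IsDDF G → τ G eps0 = G)

/-- Scalar multiplication `c ⊙ G` on Δ⁺. -/
def smulDDF (c : ℝ) (G : ℝ → ℝ) : ℝ → ℝ := fun x => if c = 0 then eps0 x else G (x / c)

/-- Distributive triangle function: `c ⊙ τ(G,H) = τ(c ⊙ G, c ⊙ H)`. -/
def IsDistributive (τ : (ℝ → ℝ) → (ℝ → ℝ) → (ℝ → ℝ)) : Prop :=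
  ∀ c : ℝ, 0 ≤ c → ∀ G H, smulDDF c (τ G H) = τ (smulDDF c G) (smulDDF c H)

/-- The Sibley (modified Lévy) metric on Δ⁺. -/
def dS (G H : ℝ → ℝ) : ℝ :=
  sInf {h : ℝ | 0 < h ∧ ∀ x ∈ Set.Icc (0:ℝ) (1/h),
    G (x - h) - h ≤ H x ∧ H x ≤ G (x + h) + h}

/-- Iterated τ-sum `⊕_{i} G i` over `Fin n` (empty sum is `ε₀`). -/
def oplus (τ : (ℝ → ℝ) → (ℝ → ℝ) → (ℝ → ℝ)) : ∀ {n : ℕ}, (Fin n → (ℝ → ℝ)) → (ℝ → ℝ)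
  | 0, _ => eps0
  | _ + 1, G => τ (G 0) (oplus τ (fun i => G i.succ))

/-- Partial sums `⊕_{k=0}^{n} G k` of a sequence. -/
def oplusPartial (τ : (ℝ → ℝ) → (ℝ → ℝ) → (ℝ → ℝ)) (G : ℕ → (ℝ → ℝ)) : ℕ → (ℝ → ℝ)
  | 0 => G 0
  | n + 1 => τ (oplusPartial τ G n) (G (n + 1))

/-- A simple non-negative function: finite values on pairwise disjoint measurable sets. -/
structure SimpleFn (S : Set (Set Ω)) where
  n : ℕ
  c : Fin n → ℝ
  A : Fin n → Set Ω
  hc : ∀ i, 0 ≤ c i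
  hA : ∀ i, A i ∈ S
  hdisj : Pairwise (Function.onFun Disjoint A)

def SimpleFn.toFun {Ω : Type*} {S : Set (Set Ω)} (f : SimpleFn S) : Ω → ℝ :=
  fun t => ∑ i, (f.A i).indicator (fun _ => f.c i) t

/-- The γ-integral of a simple function on `E`: `⊕ᵢ xᵢ ⊙ γ_{E∩Eᵢ}`. -/
def SimpleFn.integral {Ω : Type*} {S : Set (Set Ω)} (f : SimpleFn S)
    (τ : (ℝ → ℝ) → (ℝ → ℝ) → (ℝ → ℝ)) (γ : Set Ω → (ℝ → ℝ)) (E : Set Ω) : ℝ → ℝ :=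
  oplus τ (fun i => smulDDF (f.c i) (γ (E ∩ f.A i)))

/-- Left-continuous regularization `𝔊(x) = sup_{x' < x} G(x')`. -/
def lcReg (G : ℝ → ℝ) : ℝ → ℝ := fun x => sSup (G '' Set.Iio x)

/-- `𝔣 ∈ 𝒮_{f,E}` : simple functions below `f` on `E`. -/
def SimpleFn.belowOn {Ω : Type*} {S : Set (Set Ω)} (𝔣 : SimpleFn S)
    (f : Ω → ENNReal) (E : Set Ω) : Prop :=
  ∀ t ∈ E, ENNReal.ofReal (𝔣.toFun t) ≤ f t

/-- `f` is γ-integrable on `E`: the integrals of simple functions below `f`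
are bounded from below by some distance distribution function. -/
def Integrable' {Ω : Type*} {S : Set (Set Ω)}
    (τ : (ℝ → ℝ) → (ℝ → ℝ) → (ℝ → ℝ)) (γ : Set Ω → (ℝ → ℝ))
    (f : Ω → ENNReal) (E : Set Ω) : Prop :=
  ∃ H : ℝ → ℝ, IsDDF H ∧ ∀ 𝔣 : SimpleFn S, 𝔣.belowOn f E → H ≤ 𝔣.integral τ γ E

/-- The γ-integral `∫_E f dγ` : the infimum in (Δ⁺, ≤) of integrals of simple
functions below `f` on `E` (left-continuous regularization of the pointwise infimum). -/
def probIntegral {Ω : Type*} (S : Set (Set Ω))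
    (τ : (ℝ → ℝ) → (ℝ → ℝ) → (ℝ → ℝ)) (γ : Set Ω → (ℝ → ℝ))
    (f : Ω → ENNReal) (E : Set Ω) : ℝ → ℝ :=
  lcReg (fun x => sInf {y | ∃ 𝔣 : SimpleFn S, 𝔣.belowOn f E ∧ 𝔣.integral τ γ E x = y})

open Classical in
/-- The Lebesgue–Stieltjes measure of a monotone function (junk value otherwise). -/
def lsMeasure (H : ℝ → ℝ) : Measure ℝ :=
  if h : Monotone H then h.stieltjesFunction.measure else 0

/-- Convolution `(G * H)(x) = ∫₀ˣ G(x−t) dH(t)` (Lebesgue–Stieltjes). -/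
def conv (G H : ℝ → ℝ) : ℝ → ℝ := fun x =>
  if 0 < x then ∫ t in Set.Icc (0:ℝ) x, G (x - t) ∂(lsMeasure H) else 0

/-- `τ_{L,M}(G,H)(x) = sup_{L(u,v)=x} min(G(u),H(v))`. -/
def tauLM (L : ℝ → ℝ → ℝ) (G H : ℝ → ℝ) : ℝ → ℝ := fun x =>
  sSup {t | ∃ u v : ℝ, 0 ≤ u ∧ 0 ≤ v ∧ L u v = x ∧ t = min (G u) (H v)}

/-- Pseudo-addition on `[0,∞)`: commutative, associative, jointly strictly
increasing, continuous, with neutral element 0. -/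
def IsPseudoAddition (L : ℝ → ℝ → ℝ) : Prop :=
  (∀ u v, 0 ≤ u → 0 ≤ v → L u v = L v u) ∧
  (∀ u v w, 0 ≤ u → 0 ≤ v → 0 ≤ w → L (L u v) w = L u (L v w)) ∧
  (∀ u₁ u₂ v₁ v₂, 0 ≤ u₁ → 0 ≤ v₁ → u₁ < u₂ → v₁ < v₂ → L u₁ v₁ < L u₂ v₂) ∧
  Continuous (fun p : ℝ × ℝ => L p.1 p.2) ∧
  (∀ u, 0 ≤ u → L 0 u = u ∧ L u 0 = u)

/-- γ is a τ-decomposable measure on the ring S. -/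
def IsDecomposable {Ω : Type*} (S : Set (Set Ω))
    (τ : (ℝ → ℝ) → (ℝ → ℝ) → (ℝ → ℝ)) (γ : Set Ω → (ℝ → ℝ)) : Prop :=
  γ ∅ = eps0 ∧ ∀ E F : Set Ω, E ∈ S → F ∈ S → Disjoint E F → γ (E ∪ F) = τ (γ E) (γ F)

/-- γ is continuous from below: `γ_{E_n} → γ_E` weakly (in the Sibley metric)
whenever `E_n ↗ E`. -/
def ContinuousFromBelow {Ω : Type*} (S : Set (Set Ω)) (γ : Set Ω → (ℝ → ℝ)) : Prop :=
  ∀ E : ℕ → Set Ω, (∀ n, E n ∈ S) → Monotone E → (⋃ n, E n) ∈ S →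
    Tendsto (fun n => dS (γ (E n)) (γ (⋃ n, E n))) atTop (nhds 0)

/-- Sequential continuity of a triangle function w.r.t. the Sibley metric. -/
def IsContinuousTriangle (τ : (ℝ → ℝ) → (ℝ → ℝ) → (ℝ → ℝ)) : Prop :=
  ∀ (G H : ℝ → ℝ) (Gn Hn : ℕ → (ℝ → ℝ)), IsDDF G → IsDDF H → (∀ n, IsDDF (Gn n)) →
    (∀ n, IsDDF (Hn n)) →
    Tendsto (fun n => dS (Gn n) G) atTop (nhds 0) →
    Tendsto (fun n => dS (Hn n) H) atTop (nhds 0) →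
    Tendsto (fun n => dS (τ (Gn n) (Hn n)) (τ G H)) atTop (nhds 0)

/-!
Multiplying a simple function by `c > 0` is a bijection of the simple functions below `f` onto
those below `c · f`, and by distributivity it multiplies their integrals by `c ⊙ ·`. Since
`(c ⊙ G)(x) = G (x / c)` is a reparametrisation of the argument, it commutes with the pointwise
infimum and with the left-continuous regularisation. For `c = 0` every simple function below
`0 · f` on `E` has integral `ε₀`, because each term `xᵢ ⊙ γ_{E ∩ Eᵢ}` has `xᵢ = 0` or `E ∩ Eᵢ = ∅`.
-/

lemma smulDDF_zero (G : ℝ → ℝ) : smulDDF 0 G = eps0 := by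
  funext x; simp [smulDDF]

lemma smulDDF_of_pos {c : ℝ} (hc : 0 < c) (G : ℝ → ℝ) : smulDDF c G = fun x => G (x / c) := by
  funext x; simp [smulDDF, hc.ne']

lemma smulDDF_eps0 {c : ℝ} (hc : 0 ≤ c) : smulDDF c eps0 = eps0 := by
  rcases hc.eq_or_lt with rfl | hc
  · exact smulDDF_zero eps0
  · funext x
    simp [smulDDF_of_pos hc, eps0, div_pos_iff_of_pos_right hc]

lemma smulDDF_smulDDF {c d : ℝ} (hc : 0 ≤ c) (hd : 0 ≤ d) (G : ℝ → ℝ) :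
    smulDDF c (smulDDF d G) = smulDDF (c * d) G := by
  rcases hc.eq_or_lt with rfl | hc
  · simp only [smulDDF_zero, zero_mul]
  rcases hd.eq_or_lt with rfl | hd
  · simp only [smulDDF_zero, smulDDF_eps0 hc.le, mul_zero]
  simp only [smulDDF_of_pos hc, smulDDF_of_pos hd, smulDDF_of_pos (mul_pos hc hd), div_div]

lemma lcReg_eps0 : lcReg eps0 = eps0 := by
  funext x
  rcases le_or_gt x 0 with hx | hx
  · have h : EqOn eps0 (fun _ => 0) (Iio x) := fun y hy =>
      if_neg (not_lt.2 ((le_of_lt hy).trans hx))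
    simp only [lcReg, h.image_eq, nonempty_Iio.image_const, csSup_singleton, eps0,
      if_neg (not_lt.2 hx)]
  · have h : IsGreatest (eps0 '' Iio x) 1 := by
      refine ⟨⟨x / 2, half_lt_self hx, if_pos (half_pos hx)⟩, ?_⟩
      rintro _ ⟨y, -, rfl⟩
      unfold eps0; split_ifs <;> norm_num
    simp only [lcReg, h.csSup_eq, eps0, if_pos hx]

lemma lcReg_comp_div {c : ℝ} (hc : 0 < c) (G : ℝ → ℝ) :
    lcReg (fun x => G (x / c)) = fun x => lcReg G (x / c) := by
  funext x
  simp only [lcReg]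
  rw [← Function.comp_def G, image_comp]
  congr 2
  exact (OrderIso.divRight₀ c hc).image_Iio x

lemma IsDistributive.smulDDF_oplus {τ : (ℝ → ℝ) → (ℝ → ℝ) → (ℝ → ℝ)} (hd : IsDistributive τ)
    {c : ℝ} (hc : 0 ≤ c) : ∀ {n : ℕ} (G : Fin n → (ℝ → ℝ)),
    smulDDF c (oplus τ G) = oplus τ (fun i => smulDDF c (G i))
  | 0, _ => smulDDF_eps0 hc
  | _ + 1, G => by
    simp only [oplus]
    rw [hd c hc, hd.smulDDF_oplus hc]

lemma IsDistributive.oplus_eq_eps0 {τ : (ℝ → ℝ) → (ℝ → ℝ) → (ℝ → ℝ)} (hd : IsDistributive τ)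
    {n : ℕ} {G : Fin n → (ℝ → ℝ)} (hG : ∀ i, G i = eps0) : oplus τ G = eps0 := by
  -- distributivity with `c = 0` reads `ε₀ = ⊕ᵢ ε₀`
  have h := hd.smulDDF_oplus le_rfl G
  simp only [smulDDF_zero] at h
  rw [funext hG, ← h]

namespace SimpleFn

variable {Ω : Type*} {S : Set (Set Ω)}

def smul (𝔣 : SimpleFn S) {c : ℝ} (hc : 0 ≤ c) : SimpleFn S :=
  ⟨𝔣.n, fun i => c * 𝔣.c i, 𝔣.A, fun i => mul_nonneg hc (𝔣.hc i), 𝔣.hA, 𝔣.hdisj⟩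

def zero (S : Set (Set Ω)) : SimpleFn S :=
  ⟨0, Fin.elim0, Fin.elim0, fun i => i.elim0, fun i => i.elim0, fun i => i.elim0⟩

lemma smul_smul_inv (𝔣 : SimpleFn S) {c : ℝ} (hc : 0 < c) :
    (𝔣.smul (inv_nonneg.2 hc.le)).smul hc.le = 𝔣 := by
  cases 𝔣
  simp [smul, mul_inv_cancel_left₀ hc.ne']

lemma toFun_smul (𝔣 : SimpleFn S) {c : ℝ} (hc : 0 ≤ c) (t : Ω) :
    (𝔣.smul hc).toFun t = c * 𝔣.toFun t := by
  simp only [toFun, Finset.mul_sum, ← indicator_const_mul]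
  rfl

lemma toFun_zero (t : Ω) : (zero S).toFun t = 0 :=
  Fin.sum_univ_zero _

lemma le_toFun (𝔣 : SimpleFn S) {i : Fin 𝔣.n} {t : Ω} (ht : t ∈ 𝔣.A i) : 𝔣.c i ≤ 𝔣.toFun t := by
  unfold toFun
  simpa only [indicator_of_mem ht] using Finset.single_le_sum
    (f := fun j => (𝔣.A j).indicator (fun _ => 𝔣.c j) t)
    (fun j _ => indicator_nonneg (fun _ _ => 𝔣.hc j) t) (Finset.mem_univ i)

lemma belowOn_smul_iff (𝔣 : SimpleFn S) {c : ℝ} (hc : 0 < c) (f : Ω → ENNReal) (E : Set Ω) :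
    (𝔣.smul hc.le).belowOn (fun t => ENNReal.ofReal c * f t) E ↔ 𝔣.belowOn f E := by
  refine forall₂_congr fun t _ => ?_
  rw [toFun_smul, ENNReal.ofReal_mul hc.le, ENNReal.mul_le_mul_iff_right
    (ENNReal.ofReal_pos.2 hc).ne' ENNReal.ofReal_ne_top]

variable {τ : (ℝ → ℝ) → (ℝ → ℝ) → (ℝ → ℝ)} {γ : Set Ω → (ℝ → ℝ)} {E : Set Ω}

lemma integral_smul (𝔣 : SimpleFn S) (hd : IsDistributive τ) {c : ℝ} (hc : 0 ≤ c) :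
    (𝔣.smul hc).integral τ γ E = smulDDF c (𝔣.integral τ γ E) := by
  simp only [integral, hd.smulDDF_oplus hc, smulDDF_smulDDF hc (𝔣.hc _)]
  rfl

lemma integral_zero : (zero S).integral τ γ E = eps0 := by
  simp only [integral, zero, oplus]

lemma integral_eq_eps0_of_belowOn_zero (𝔣 : SimpleFn S) (hd : IsDistributive τ)
    (hγ : γ ∅ = eps0) (h𝔣 : 𝔣.belowOn (fun _ => 0) E) : 𝔣.integral τ γ E = eps0 := by
  refine hd.oplus_eq_eps0 fun i => ?_
  rcases (E ∩ 𝔣.A i).eq_empty_or_nonempty with hempty | ⟨t, htE, htA⟩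
  · rw [hempty, hγ, smulDDF_eps0 (𝔣.hc i)]
  · have hzero : 𝔣.toFun t ≤ 0 := ENNReal.ofReal_eq_zero.1 (nonpos_iff_eq_zero.1 (h𝔣 t htE))
    rw [le_antisymm ((𝔣.le_toFun htA).trans hzero) (𝔣.hc i), smulDDF_zero]

end SimpleFn

def lowerIntegral {Ω : Type*} (S : Set (Set Ω)) (τ : (ℝ → ℝ) → (ℝ → ℝ) → (ℝ → ℝ))
    (γ : Set Ω → (ℝ → ℝ)) (f : Ω → ENNReal) (E : Set Ω) : ℝ → ℝ :=
  fun x => sInf {y | ∃ 𝔣 : SimpleFn S, 𝔣.belowOn f E ∧ 𝔣.integral τ γ E x = y}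

section lowerIntegral

variable {Ω : Type*} {S : Set (Set Ω)} {τ : (ℝ → ℝ) → (ℝ → ℝ) → (ℝ → ℝ)} {γ : Set Ω → (ℝ → ℝ)}
  {E : Set Ω}

lemma probIntegral_eq_lcReg_lowerIntegral (f : Ω → ENNReal) :
    probIntegral S τ γ f E = lcReg (lowerIntegral S τ γ f E) := rfl

lemma lowerIntegral_zero (hd : IsDistributive τ) (hγ : γ ∅ = eps0) :
    lowerIntegral S τ γ (fun _ => 0) E = eps0 := by
  funext x
  have h : {y | ∃ 𝔣 : SimpleFn S, 𝔣.belowOn (fun _ => 0) E ∧ 𝔣.integral τ γ E x = y}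
      = {eps0 x} := by
    ext y
    constructor
    · rintro ⟨𝔣, h𝔣, rfl⟩
      rw [𝔣.integral_eq_eps0_of_belowOn_zero hd hγ h𝔣, mem_singleton_iff]
    · rintro rfl
      exact ⟨SimpleFn.zero S, fun t _ => by simp [SimpleFn.toFun_zero],
        congrFun SimpleFn.integral_zero x⟩
  simp only [lowerIntegral, h, csInf_singleton]

lemma lowerIntegral_const_mul (hd : IsDistributive τ) {c : ℝ} (hc : 0 < c) (f : Ω → ENNReal) :
    lowerIntegral S τ γ (fun t => ENNReal.ofReal c * f t) E =
      fun x => lowerIntegral S τ γ f E (x / c) := by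
  funext x
  have h : {y | ∃ 𝔤 : SimpleFn S,
        𝔤.belowOn (fun t => ENNReal.ofReal c * f t) E ∧ 𝔤.integral τ γ E x = y}
      = {y | ∃ 𝔣 : SimpleFn S, 𝔣.belowOn f E ∧ 𝔣.integral τ γ E (x / c) = y} := by
    ext y
    constructor
    · rintro ⟨𝔤, h𝔤, rfl⟩
      obtain ⟨𝔣, rfl⟩ : ∃ 𝔣 : SimpleFn S, 𝔣.smul hc.le = 𝔤 := ⟨_, 𝔤.smul_smul_inv hc⟩
      refine ⟨𝔣, (SimpleFn.belowOn_smul_iff _ hc f E).1 h𝔤, ?_⟩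
      rw [SimpleFn.integral_smul _ hd, smulDDF_of_pos hc]
    · rintro ⟨𝔣, h𝔣, rfl⟩
      refine ⟨𝔣.smul hc.le, (SimpleFn.belowOn_smul_iff _ hc f E).2 h𝔣, ?_⟩
      rw [SimpleFn.integral_smul _ hd, smulDDF_of_pos hc]
  simp only [lowerIntegral, h]

end lowerIntegral

theorem stmt14_general {Ω : Type*} (S : Set (Set Ω))
    (τ : (ℝ → ℝ) → (ℝ → ℝ) → (ℝ → ℝ)) (hd : IsDistributive τ)
    (γ : Set Ω → (ℝ → ℝ)) (hγ : IsDecomposable S τ γ)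
    (f : Ω → ENNReal) (E : Set Ω) (c : ℝ) (hc : 0 ≤ c) :
    probIntegral S τ γ (fun t => ENNReal.ofReal c * f t) E =
      smulDDF c (probIntegral S τ γ f E) := by
  simp only [probIntegral_eq_lcReg_lowerIntegral]
  rcases hc.eq_or_lt with rfl | hc
  · simp only [ENNReal.ofReal_zero, zero_mul, lowerIntegral_zero hd hγ.1, lcReg_eps0,
      smulDDF_zero]
  · rw [lowerIntegral_const_mul hd hc, lcReg_comp_div hc, smulDDF_of_pos hc]

/-- the γ-integral is positively homogeneous:
∫_E (c·f) dγ = c ⊙ ∫_E f dγ. -/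
theorem stmt14 {Ω : Type*} (S : Set (Set Ω)) (hS : MeasureTheory.IsSetRing S)
    (τ : (ℝ → ℝ) → (ℝ → ℝ) → (ℝ → ℝ)) (hτ : IsTriangleFn τ) (hd : IsDistributive τ)
    (γ : Set Ω → (ℝ → ℝ)) (hmem : ∀ E ∈ S, IsDDF (γ E)) (hγ : IsDecomposable S τ γ)
    (f : Ω → ENNReal) (E : Set Ω) (hE : E ∈ S)
    (hf : Integrable' (S := S) τ γ f E) (c : ℝ) (hc : 0 ≤ c) :
    probIntegral S τ γ (fun t => ENNReal.ofReal c * f t) E =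
      smulDDF c (probIntegral S τ γ f E) :=
  stmt14_general S τ hd γ hγ f E c hc
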